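/- Euler's transformation of series: if (a_n)_{n≥1} is a sequence of complex numbers such that the series ∑_{n=1}^∞ (−1)^{n−1} a_n converges, then the series ∑_{n=0}^∞ (1/2^{n+1}) ∑_{k=0}^n (−1)^k · binom(n,k) · a_{k+1} converges and the two sums are equal. -/

import Mathlib

/-!
The `N`-th partial sum of the Euler transform is the binomial mean
`2⁻ᴺ ∑ₘ C(N, m) sₘ` of the partial sums `sₘ` of the alternating series: by Pascal's rule the
binomial sums `F N = ∑ₘ C(N, m) sₘ` satisfy `F (N + 1) = 2 F N + bₙ`, where `bₙ` is the `N`-th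
inner sum of the transform. Binomial means are a regular summation method (Toeplitz): the weights
`C(N, m) / 2ᴺ` are nonnegative, sum to `1`, and tend to `0` for each fixed `m`, since
`C(N, m) ≤ Nᵐ`. Hence they converge to the same limit as `sₘ`.
-/

open Filter Finset Topology

/-- Toeplitz's theorem for nonnegative weights. -/
theorem tendsto_sum_range_mul_of_tendsto_zero {w : ℕ → ℕ → ℝ} {d : ℕ → ℝ}
    (hw : ∀ N m, 0 ≤ w N m) (hrow : ∀ N, ∑ m ∈ range (N + 1), w N m ≤ 1)
    (hcol : ∀ m, Tendsto (fun N => w N m) atTop (𝓝 0))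
    (hd_nonneg : ∀ m, 0 ≤ d m) (hd : Tendsto d atTop (𝓝 0)) :
    Tendsto (fun N => ∑ m ∈ range (N + 1), w N m * d m) atTop (𝓝 0) := by
  refine Metric.tendsto_atTop.2 fun ε hε => ?_
  obtain ⟨M, hM⟩ := Metric.tendsto_atTop.1 hd (ε / 2) (half_pos hε)
  have hhead : Tendsto (fun N => ∑ m ∈ range M, w N m * d m) atTop (𝓝 0) := by
    simpa using tendsto_finsetSum (range M) fun m _ => (hcol m).mul_const (d m)
  obtain ⟨N₀, hN₀⟩ := Metric.tendsto_atTop.1 hhead (ε / 2) (half_pos hε)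
  refine ⟨N₀, fun N hN => ?_⟩
  have hterm_nonneg m : 0 ≤ w N m * d m := mul_nonneg (hw N m) (hd_nonneg m)
  have hlow : ∑ m ∈ (range (N + 1)).filter (· < M), w N m * d m
      ≤ ∑ m ∈ range M, w N m * d m :=
    sum_le_sum_of_subset_of_nonneg (fun m => by simp) fun m _ _ => hterm_nonneg m
  have hhigh : ∑ m ∈ (range (N + 1)).filter (¬ · < M), w N m * d m ≤ ε / 2 := calc
    _ ≤ ∑ m ∈ (range (N + 1)).filter (¬ · < M), w N m * (ε / 2) := by
      refine sum_le_sum fun m hm => mul_le_mul_of_nonneg_left ?_ (hw N m)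
      have := hM m (not_lt.1 (mem_filter.1 hm).2)
      rw [Real.dist_eq, sub_zero, abs_of_nonneg (hd_nonneg m)] at this
      exact this.le
    _ ≤ ∑ m ∈ range (N + 1), w N m * (ε / 2) :=
      sum_le_sum_of_subset_of_nonneg (filter_subset _ _) fun m _ _ =>
        mul_nonneg (hw N m) (half_pos hε).le
    _ = (∑ m ∈ range (N + 1), w N m) * (ε / 2) := (sum_mul ..).symm
    _ ≤ ε / 2 := mul_le_of_le_one_left (half_pos hε).le (hrow N)
  have hhead_small := hN₀ N hN
  rw [Real.dist_eq, sub_zero] at hhead_small ⊢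
  rw [abs_of_nonneg (sum_nonneg fun m _ => hterm_nonneg m),
    ← sum_filter_add_sum_filter_not _ (· < M)]
  linarith [le_abs_self (∑ m ∈ range M, w N m * d m)]

theorem Filter.Tendsto.sum_range_smul_of_weights {E : Type*} [SeminormedAddCommGroup E]
    [NormedSpace ℝ E] {w : ℕ → ℕ → ℝ} (hw : ∀ N m, 0 ≤ w N m)
    (hrow : ∀ N, ∑ m ∈ range (N + 1), w N m = 1)
    (hcol : ∀ m, Tendsto (fun N => w N m) atTop (𝓝 0)) {s : ℕ → E} {L : E}
    (hs : Tendsto s atTop (𝓝 L)) :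
    Tendsto (fun N => ∑ m ∈ range (N + 1), w N m • s m) atTop (𝓝 L) := by
  refine tendsto_iff_norm_sub_tendsto_zero.2 <| squeeze_zero (fun _ => norm_nonneg _)
    (fun N => ?_) <| tendsto_sum_range_mul_of_tendsto_zero hw (fun N => (hrow N).le) hcol
      (fun _ => norm_nonneg _) (tendsto_iff_norm_sub_tendsto_zero.1 hs)
  calc ‖∑ m ∈ range (N + 1), w N m • s m - L‖
      = ‖∑ m ∈ range (N + 1), w N m • (s m - L)‖ := by
        simp only [smul_sub, sum_sub_distrib, ← sum_smul, hrow N, one_smul]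
    _ ≤ ∑ m ∈ range (N + 1), ‖w N m • (s m - L)‖ := norm_sum_le _ _
    _ = ∑ m ∈ range (N + 1), w N m * ‖s m - L‖ := by
        simp only [norm_smul, Real.norm_of_nonneg (hw N _)]

theorem tendsto_choose_div_two_pow (m : ℕ) :
    Tendsto (fun N : ℕ => (N.choose m : ℝ) / 2 ^ N) atTop (𝓝 0) :=
  squeeze_zero (fun _ => by positivity)
    (fun N => div_le_div_of_nonneg_right (by exact_mod_cast Nat.choose_le_pow N m) (by positivity))
    (tendsto_pow_const_div_const_pow_of_one_lt m one_lt_two)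

theorem Filter.Tendsto.binomialMean_smul {E : Type*} [SeminormedAddCommGroup E]
    [NormedSpace ℝ E] {s : ℕ → E} {L : E} (hs : Tendsto s atTop (𝓝 L)) :
    Tendsto (fun N => (2 ^ N : ℝ)⁻¹ • ∑ m ∈ range (N + 1), N.choose m • s m) atTop (𝓝 L) := by
  have hrow N : ∑ m ∈ range (N + 1), (N.choose m : ℝ) / 2 ^ N = 1 := by
    rw [← sum_div, div_eq_one_iff_eq (by positivity)]
    exact_mod_cast N.sum_range_choose
  convert hs.sum_range_smul_of_weights (fun _ _ => by positivity) hrow tendsto_choose_div_two_pow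
    using 2 with N
  simp only [smul_sum, smul_smul, ← Nat.cast_smul_eq_nsmul ℝ, div_eq_inv_mul]

theorem sum_range_choose_smul_partialSum_succ {M : Type*} [AddCommMonoid M] (c : ℕ → M)
    (N : ℕ) :
    ∑ m ∈ range (N + 2), (N + 1).choose m • ∑ k ∈ range m, c k
      = 2 • ∑ m ∈ range (N + 1), N.choose m • ∑ k ∈ range m, c k
        + ∑ k ∈ range (N + 1), N.choose k • c k := by
  have hshift : ∑ m ∈ range (N + 1), N.choose (m + 1) • ∑ k ∈ range (m + 1), c k
      = ∑ m ∈ range (N + 1), N.choose m • ∑ k ∈ range m, c k := by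
    rw [sum_range_succ, Nat.choose_succ_self, zero_smul, add_zero, sum_range_succ' _ N]
    simp
  have hstep : ∑ m ∈ range (N + 1), N.choose m • ∑ k ∈ range (m + 1), c k
      = ∑ m ∈ range (N + 1), N.choose m • ∑ k ∈ range m, c k
        + ∑ k ∈ range (N + 1), N.choose k • c k := by
    rw [← sum_add_distrib]
    exact sum_congr rfl fun m _ => by rw [sum_range_succ, smul_add]
  rw [sum_range_succ', sum_range_zero, smul_zero, add_zero]
  simp only [Nat.choose_succ_succ', add_smul, sum_add_distrib, hshift, hstep]
  abel

theorem sum_range_eulerTransform_eq_binomialMean {𝕜 E : Type*} [DivisionSemiring 𝕜]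
    [NeZero (2 : 𝕜)] [AddCommGroup E] [Module 𝕜 E] (c : ℕ → E) (N : ℕ) :
    ∑ n ∈ range N, (2 ^ (n + 1) : 𝕜)⁻¹ • ∑ k ∈ range (n + 1), n.choose k • c k
      = (2 ^ N : 𝕜)⁻¹ • ∑ m ∈ range (N + 1), N.choose m • ∑ k ∈ range m, c k := by
  induction N with
  | zero => simp
  | succ N ih =>
    rw [sum_range_succ, ih, sum_range_choose_smul_partialSum_succ, smul_add, two_nsmul, smul_add,
      pow_succ, mul_inv_rev, mul_smul, mul_smul, ← smul_add, ← two_nsmul,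
      ← Nat.cast_smul_eq_nsmul 𝕜, Nat.cast_ofNat, inv_smul_smul₀ two_ne_zero]

/-- Euler's transformation of series: if ∑_{n=1}^∞ (−1)^{n−1} a_n converges to L,
then ∑_{n=0}^∞ (1/2^{n+1}) ∑_{k=0}^n (−1)^k C(n,k) a_{k+1} converges to L. -/
theorem stmt_19 (a : ℕ → ℂ) (L : ℂ)
    (h : Tendsto (fun N : ℕ => ∑ n ∈ Finset.range N, (-1 : ℂ) ^ n * a (n + 1))
      atTop (nhds L)) :
    Tendsto (fun N : ℕ => ∑ n ∈ Finset.range N,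
        (1 / 2 ^ (n + 1) : ℂ) * ∑ k ∈ Finset.range (n + 1),
          (-1 : ℂ) ^ k * (n.choose k : ℂ) * a (k + 1))
      atTop (nhds L) := by
  have hmean := h.binomialMean_smul
  simp only [← sum_range_eulerTransform_eq_binomialMean (𝕜 := ℝ)] at hmean
  convert hmean using 3 with N n
  simp only [Complex.real_smul, nsmul_eq_mul, mul_sum]
  push_cast
  exact sum_congr rfl fun k _ => by ring
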